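/- Fix integers p ≥ 1 and κ ≥ p + 4, and let l₁, l₂ ≥ max{p + 2, ⌈(κ+1)/2⌉}. If Q₁ ∈ Δ^γ_{0,l₁} and Q₂ ∈ Δ^γ_{0,l₂} are two distinct cubes having the same label i ∈ {1,…,2^κ}ⁿ, then d(Q₁ + 𝓒_{2^p}, Q₂ + 𝓒_{2^p}) > 0, where d denotes the Euclidean distance between sets. -/

import Mathlib

/-! Points of `Q + 𝓒_{2^p}` with `Q ⊆ L_l` lie within `2^{p+2-l}` of `Q`: the admissible radius at
`z` is at most `2^p / |z|`, and `|z| ≥ 2^{l-2}`. So it suffices to separate the cubes themselves by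
more than `2^{p+2-l₁} + 2^{p+2-l₂}`, say with `l₁ ≤ l₂`. If `l₁ = l₂`, equal labels make the
integer corners differ by a nonzero multiple of `2^κ` in some coordinate. If `l₂ = l₁ + 1`, pick a
coordinate in which `Q₂` leaves `[-2^{l₁}, 2^{l₁})ⁿ`; since `2^κ ∣ 2^{2l₁}`, the congruence of the
corners again forces a gap of at least `(2^κ - 1) 2^{-l₂}`. If `l₂ ≥ l₁ + 2`, the layers
themselves are `2^{l₁}` apart. -/

open MeasureTheory Metric Set

noncomputable section

/-- Euclidean space ℝⁿ. -/
abbrev E (n : ℕ) := EuclideanSpace ℝ (Fin n)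

/-- m(x) = min {1, 1/|x|} (with value 1 at x = 0). -/
def mFun {n : ℕ} (x : E n) : ℝ := if ‖x‖ ≤ 1 then 1 else ‖x‖⁻¹

/-- The dyadic cube `2^{-m}(v + [0,1)ⁿ)` of `Δ_m`. -/
def dyadicCube (n : ℕ) (m : ℤ) (v : Fin n → ℤ) : Set (E n) :=
  {y | ∀ i, y i ∈ Set.Ico ((2 : ℝ) ^ (-m) * v i) ((2 : ℝ) ^ (-m) * (v i + 1))}

/-- The layers `L_0 = [-1,1)ⁿ` and `L_l = [-2^l,2^l)ⁿ \ [-2^{l-1},2^{l-1})ⁿ` for `l ≥ 1`. -/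
def layer (n : ℕ) (l : ℕ) : Set (E n) :=
  if l = 0 then {y | ∀ i, y i ∈ Set.Ico (-1 : ℝ) 1}
  else {y | ∀ i, y i ∈ Set.Ico (-(2 : ℝ) ^ l) ((2 : ℝ) ^ l)} \
       {y | ∀ i, y i ∈ Set.Ico (-(2 : ℝ) ^ (l - 1)) ((2 : ℝ) ^ (l - 1))}

/-- `A + 𝓒_α`: the set of centres of balls in `𝓑_α` that intersect `A`. -/
def plusC (n : ℕ) (α : ℝ) (A : Set (E n)) : Set (E n) :=
  {z | ∃ r : ℝ, 0 ≤ r ∧ r ≤ α * mFun z ∧ (ball z r ∩ A).Nonempty}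

lemma mFun_le_one {n : ℕ} (x : E n) : mFun x ≤ 1 := by
  unfold mFun
  split_ifs with h
  · rfl
  · exact inv_le_one_of_one_le₀ (le_of_not_ge h)

lemma mFun_le_inv_norm {n : ℕ} {x : E n} (hx : x ≠ 0) : mFun x ≤ ‖x‖⁻¹ := by
  unfold mFun
  split_ifs with h
  · exact (one_le_inv₀ (norm_pos_iff.2 hx)).2 h
  · rfl

lemma exists_dist_lt_of_mem_plusC {n : ℕ} {α R : ℝ} {A : Set (E n)} {z : E n}
    (hα : 0 < α) (hR : 2 * α ≤ R) (hA : ∀ y ∈ A, R ≤ ‖y‖) (hz : z ∈ plusC n α A) :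
    ∃ y ∈ A, dist z y < 2 * α / R := by
  obtain ⟨r, -, hr, y, hyz, hyA⟩ := hz
  have hzy : dist z y < α * mFun z := (mem_ball'.1 hyz).trans_le hr
  have hzy_lt : dist z y < α := hzy.trans_le (mul_le_of_le_one_right hα.le (mFun_le_one z))
  have hz : R / 2 ≤ ‖z‖ := by
    have := norm_sub_norm_le y z
    rw [← dist_eq_norm, dist_comm] at this
    linarith [hA y hyA]
  have hz₀ : z ≠ 0 := norm_pos_iff.1 (by linarith)
  refine ⟨y, hyA, hzy.trans_le ?_⟩
  calc α * mFun z ≤ α * ‖z‖⁻¹ := by gcongr; exact mFun_le_inv_norm hz₀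
    _ ≤ α * (R / 2)⁻¹ := by gcongr; linarith
    _ = 2 * α / R := by field_simp

lemma le_dist_of_dist_lt_of_separated {X : Type*} [PseudoMetricSpace X] {A B : Set X}
    {c ρ₁ ρ₂ : ℝ} (hAB : ∀ a ∈ A, ∀ b ∈ B, c ≤ dist a b) {z₁ z₂ : X}
    (h₁ : ∃ a ∈ A, dist z₁ a < ρ₁) (h₂ : ∃ b ∈ B, dist z₂ b < ρ₂) :
    c - ρ₁ - ρ₂ ≤ dist z₁ z₂ := by
  obtain ⟨a, ha, hza⟩ := h₁
  obtain ⟨b, hb, hzb⟩ := h₂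
  linarith [hAB a ha b hb, dist_triangle4 a z₁ z₂ b, dist_comm a z₁]

lemma div_le_dist_of_le_abs_mul_sub {n : ℕ} {y₁ y₂ : E n} (j : Fin n) {t g : ℝ} (ht : 0 < t)
    (h : g ≤ |t * y₁ j - t * y₂ j|) : g / t ≤ dist y₁ y₂ := by
  rw [← mul_sub, abs_mul, abs_of_pos ht] at h
  rw [div_le_iff₀' ht]
  exact h.trans (mul_le_mul_of_nonneg_left (PiLp.dist_apply_le y₁ y₂ j) ht.le)

lemma coord_bounds_of_mem_layer {n l : ℕ} {y : E n} (hy : y ∈ layer n l) (i : Fin n) :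
    -(2 : ℝ) ^ l ≤ y i ∧ y i < 2 ^ l := by
  unfold layer at hy
  split_ifs at hy with hl
  · simpa [hl] using hy i
  · exact hy.1 i

lemma exists_coord_outside_of_mem_layer {n l : ℕ} (hl : 1 ≤ l) {y : E n} (hy : y ∈ layer n l) :
    ∃ i, y i < -(2 : ℝ) ^ (l - 1) ∨ (2 : ℝ) ^ (l - 1) ≤ y i := by
  rw [layer, if_neg (by omega)] at hy
  obtain ⟨i, hi⟩ := not_forall.1 hy.2
  exact ⟨i, by rwa [mem_Ico, not_and_or, not_le, not_lt] at hi⟩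

lemma exists_two_pow_le_abs_of_mem_layer {n l : ℕ} (hl : 1 ≤ l) {y : E n} (hy : y ∈ layer n l) :
    ∃ i, (2 : ℝ) ^ (l - 1) ≤ |y i| := by
  obtain ⟨i, hi⟩ := exists_coord_outside_of_mem_layer hl hy
  exact ⟨i, le_abs'.2 (hi.imp (fun h => by linarith) id)⟩

lemma two_pow_le_norm_of_mem_layer {n l : ℕ} (hl : 1 ≤ l) {y : E n} (hy : y ∈ layer n l) :
    (2 : ℝ) ^ (l - 1) ≤ ‖y‖ := by
  obtain ⟨i, hi⟩ := exists_two_pow_le_abs_of_mem_layer hl hy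
  exact hi.trans (PiLp.norm_apply_le y i)

lemma two_pow_le_dist_of_mem_layer {n l₁ l₂ : ℕ} (hl : l₁ + 2 ≤ l₂) {y₁ y₂ : E n}
    (hy₁ : y₁ ∈ layer n l₁) (hy₂ : y₂ ∈ layer n l₂) : (2 : ℝ) ^ l₁ ≤ dist y₁ y₂ := by
  obtain ⟨i, hi⟩ := exists_two_pow_le_abs_of_mem_layer (by omega) hy₂
  obtain ⟨hy₁i_ge, hy₁i_lt⟩ := coord_bounds_of_mem_layer hy₁ i
  have hy₁i : |y₁ i| ≤ 2 ^ l₁ := abs_le.2 ⟨hy₁i_ge, hy₁i_lt.le⟩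
  have hpow : (2 : ℝ) ^ (l₁ + 1) ≤ 2 ^ (l₂ - 1) := pow_le_pow_right₀ one_le_two (by omega)
  calc (2 : ℝ) ^ l₁ ≤ |y₂ i| - |y₁ i| := by rw [pow_succ] at hpow; linarith
    _ ≤ |y₁ i - y₂ i| := by rw [abs_sub_comm]; exact abs_sub_abs_le_abs_sub _ _
    _ ≤ dist y₁ y₂ := PiLp.dist_apply_le y₁ y₂ i

lemma exists_dist_lt_of_mem_plusC_of_subset_layer {n p l : ℕ} (hl : p + 2 ≤ l) {A : Set (E n)}
    (hA : A ⊆ layer n l) {z : E n} (hz : z ∈ plusC n (2 ^ p) A) :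
    ∃ y ∈ A, dist z y < 2 ^ (p + 2) / 2 ^ l := by
  have hl' : l = (l - 1) + 1 := by omega
  have key := exists_dist_lt_of_mem_plusC (R := 2 ^ (l - 1)) (by positivity)
    (by rw [← pow_succ']; exact pow_le_pow_right₀ one_le_two (by omega))
    (fun y hy => two_pow_le_norm_of_mem_layer (by omega) (hA hy)) hz
  convert key using 3
  rw [hl', pow_succ, pow_succ, pow_succ, Nat.add_sub_cancel]
  field_simp

lemma mem_dyadicCube_iff {n : ℕ} {m : ℤ} {v : Fin n → ℤ} {y : E n} :
    y ∈ dyadicCube n m v ↔ ∀ i, (v i : ℝ) ≤ 2 ^ m * y i ∧ 2 ^ m * y i < v i + 1 := by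
  have hm : (0 : ℝ) < 2 ^ m := by positivity
  simp only [dyadicCube, mem_ofPred_eq, mem_Ico, zpow_neg, inv_mul_le_iff₀ hm, lt_inv_mul_iff₀ hm]

lemma two_pow_mul_toLp_apply {n : ℕ} (m : ℤ) (v : Fin n → ℤ) (i : Fin n) :
    (2 : ℝ) ^ m * (WithLp.toLp 2 (fun i => (2 : ℝ) ^ (-m) * v i) : E n) i = v i := by
  simp [← mul_assoc, mul_inv_cancel₀ (zpow_ne_zero m (two_ne_zero' ℝ))]

lemma toLp_mem_dyadicCube {n : ℕ} (m : ℤ) (v : Fin n → ℤ) :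
    (WithLp.toLp 2 (fun i => (2 : ℝ) ^ (-m) * v i) : E n) ∈ dyadicCube n m v :=
  mem_dyadicCube_iff.2 fun i => by rw [two_pow_mul_toLp_apply]; simp

lemma corner_bounds_of_dyadicCube_subset_layer {n l : ℕ} {v : Fin n → ℤ}
    (hQ : dyadicCube n l v ⊆ layer n l) (i : Fin n) :
    -2 ^ (2 * l) ≤ v i ∧ v i < 2 ^ (2 * l) := by
  have hy := coord_bounds_of_mem_layer (hQ (toLp_mem_dyadicCube l v)) i
  have hv := two_pow_mul_toLp_apply (l : ℤ) v i
  have hpos : (0 : ℝ) < 2 ^ l := by positivity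
  have hsq : (2 : ℝ) ^ (2 * l) = 2 ^ l * 2 ^ l := by rw [two_mul, pow_add]
  rw [zpow_natCast] at hv
  constructor
  · have : (-2 ^ (2 * l) : ℝ) ≤ v i := by rw [hsq, ← hv]; nlinarith
    exact_mod_cast this
  · have : (v i : ℝ) < 2 ^ (2 * l) := by rw [hsq, ← hv]; nlinarith
    exact_mod_cast this

lemma exists_corner_outside_of_dyadicCube_subset_layer {n l : ℕ} (hl : 1 ≤ l) {v : Fin n → ℤ}
    (hQ : dyadicCube n l v ⊆ layer n l) :
    ∃ i, v i < -2 ^ (2 * l - 1) ∨ 2 ^ (2 * l - 1) ≤ v i := by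
  obtain ⟨i, hi⟩ := exists_coord_outside_of_mem_layer hl (hQ (toLp_mem_dyadicCube l v))
  have hv := two_pow_mul_toLp_apply (l : ℤ) v i
  have hpos : (0 : ℝ) < 2 ^ l := by positivity
  have hpow : (2 : ℝ) ^ (2 * l - 1) = 2 ^ l * 2 ^ (l - 1) := by rw [← pow_add]; congr 1; omega
  rw [zpow_natCast] at hv
  refine ⟨i, hi.imp (fun h => ?_) (fun h => ?_)⟩
  · have : (v i : ℝ) < -2 ^ (2 * l - 1) := by rw [hpow, ← hv]; nlinarith
    exact_mod_cast this
  · have : (2 : ℝ) ^ (2 * l - 1) ≤ v i := by rw [hpow, ← hv]; nlinarith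
    exact_mod_cast this

lemma add_le_or_add_le_of_modEq_of_ne {N a b : ℤ} (h : a ≡ b [ZMOD N]) (hne : a ≠ b) :
    a + N ≤ b ∨ b + N ≤ a := by
  obtain ⟨k, hk⟩ := Int.modEq_iff_dvd.1 h
  have hk₀ : k ≠ 0 := by rintro rfl; omega
  have : N ≤ |b - a| := by
    rw [hk, abs_mul]
    exact (le_abs_self N).trans (le_mul_of_one_le_right (abs_nonneg N) (Int.one_le_abs hk₀))
  rcases le_abs'.1 this with h | h <;> omega

-- `b - a ∓ M` is a nonzero multiple of `N`, where the sign is that of `b`.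
lemma add_le_two_mul_or_of_modEq {N M a b : ℤ} (h : a ≡ b [ZMOD N]) (hNM : N ∣ M)
    (ha : -M ≤ a ∧ a < M) (hb : b < -(2 * M) ∨ 2 * M ≤ b) :
    2 * a + 1 + N ≤ b ∨ b + N ≤ 2 * a := by
  have hdvd : N ∣ b - a := Int.modEq_iff_dvd.1 h
  rcases hb with hb | hb
  · have : N ≤ a - b - M := Int.le_of_dvd (by omega) (by
      rw [show a - b - M = -(b - a + M) by ring]
      exact dvd_neg.2 (dvd_add hdvd hNM))
    right; omega
  · have : N ≤ b - a - M := Int.le_of_dvd (by omega) (dvd_sub hdvd hNM)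
    left; omega

lemma le_dist_of_modEq_of_same_level {n κ l : ℕ} {v₁ v₂ : Fin n → ℤ} (hne : v₁ ≠ v₂)
    (hlabel : ∀ j, v₁ j ≡ v₂ j [ZMOD 2 ^ κ]) {y₁ y₂ : E n}
    (hy₁ : y₁ ∈ dyadicCube n l v₁) (hy₂ : y₂ ∈ dyadicCube n l v₂) :
    ((2 : ℝ) ^ κ - 1) / 2 ^ l ≤ dist y₁ y₂ := by
  obtain ⟨j, hj⟩ := Function.ne_iff.1 hne
  have hgap : (v₁ j : ℝ) + 2 ^ κ ≤ v₂ j ∨ (v₂ j : ℝ) + 2 ^ κ ≤ v₁ j := by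
    exact_mod_cast add_le_or_add_le_of_modEq_of_ne (hlabel j) hj
  have h₁ := mem_dyadicCube_iff.1 hy₁ j
  have h₂ := mem_dyadicCube_iff.1 hy₂ j
  rw [zpow_natCast] at h₁ h₂
  refine div_le_dist_of_le_abs_mul_sub j (by positivity) (le_abs'.2 ?_)
  exact hgap.imp (fun _ => by linarith) (fun _ => by linarith)

lemma le_dist_of_modEq_of_adjacent_level {n κ l : ℕ} (hκ : κ ≤ 2 * l) {v₁ v₂ : Fin n → ℤ}
    (hQ₁ : dyadicCube n l v₁ ⊆ layer n l) (hQ₂ : dyadicCube n (l + 1 : ℕ) v₂ ⊆ layer n (l + 1))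
    (hlabel : ∀ j, v₁ j ≡ v₂ j [ZMOD 2 ^ κ]) {y₁ y₂ : E n}
    (hy₁ : y₁ ∈ dyadicCube n l v₁) (hy₂ : y₂ ∈ dyadicCube n (l + 1 : ℕ) v₂) :
    ((2 : ℝ) ^ κ - 1) / 2 ^ (l + 1) ≤ dist y₁ y₂ := by
  obtain ⟨j, hj⟩ := exists_corner_outside_of_dyadicCube_subset_layer (by omega) hQ₂
  rw [show 2 * (l + 1) - 1 = 2 * l + 1 by omega, pow_succ'] at hj
  have hgap : 2 * (v₁ j : ℝ) + 1 + 2 ^ κ ≤ v₂ j ∨ (v₂ j : ℝ) + 2 ^ κ ≤ 2 * v₁ j := by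
    exact_mod_cast add_le_two_mul_or_of_modEq (hlabel j) (pow_dvd_pow 2 hκ)
      (corner_bounds_of_dyadicCube_subset_layer hQ₁ j) hj
  have h₁ := mem_dyadicCube_iff.1 hy₁ j
  have h₂ := mem_dyadicCube_iff.1 hy₂ j
  rw [zpow_natCast] at h₁ h₂
  have hy₁' : (2 : ℝ) ^ (l + 1) * y₁ j = 2 * (2 ^ l * y₁ j) := by ring
  refine div_le_dist_of_le_abs_mul_sub j (by positivity) (le_abs'.2 ?_)
  exact hgap.imp (fun _ => by linarith) (fun _ => by linarith)

lemma exists_separation_of_same_label {n p κ l₁ l₂ : ℕ} (hκ : p + 4 ≤ κ) (hκl : κ ≤ 2 * l₁)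
    (hl₁ : p + 2 ≤ l₁) (hll : l₁ ≤ l₂) {v₁ v₂ : Fin n → ℤ}
    (hQ₁ : dyadicCube n l₁ v₁ ⊆ layer n l₁) (hQ₂ : dyadicCube n l₂ v₂ ⊆ layer n l₂)
    (hne : dyadicCube n l₁ v₁ ≠ dyadicCube n l₂ v₂) (hlabel : ∀ j, v₁ j ≡ v₂ j [ZMOD 2 ^ κ]) :
    ∃ c : ℝ, 2 ^ (p + 2) / 2 ^ l₁ + 2 ^ (p + 2) / 2 ^ l₂ < c ∧
      ∀ y₁ ∈ dyadicCube n l₁ v₁, ∀ y₂ ∈ dyadicCube n l₂ v₂, c ≤ dist y₁ y₂ := by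
  have hκR : (2 : ℝ) ^ (p + 2) * 4 ≤ 2 ^ κ := by
    rw [show (4 : ℝ) = 2 ^ 2 by norm_num, ← pow_add]
    exact pow_le_pow_right₀ one_le_two hκ
  have hρ : (4 : ℝ) ≤ 2 ^ (p + 2) := by
    rw [show (4 : ℝ) = 2 ^ 2 by norm_num]; exact pow_le_pow_right₀ one_le_two (by omega)
  rcases (by omega : l₁ = l₂ ∨ l₂ = l₁ + 1 ∨ l₁ + 2 ≤ l₂) with h | h | hfar
  · subst h
    refine ⟨(2 ^ κ - 1) / 2 ^ l₁, ?_, fun y₁ hy₁ y₂ hy₂ =>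
      le_dist_of_modEq_of_same_level (fun h => hne (congrArg _ h)) hlabel hy₁ hy₂⟩
    rw [← add_div]
    gcongr
    linarith
  · subst h
    refine ⟨(2 ^ κ - 1) / 2 ^ (l₁ + 1), ?_, fun y₁ hy₁ y₂ hy₂ =>
      le_dist_of_modEq_of_adjacent_level hκl hQ₁ hQ₂ hlabel hy₁ hy₂⟩
    rw [show (2 : ℝ) ^ (p + 2) / 2 ^ l₁ + 2 ^ (p + 2) / 2 ^ (l₁ + 1)
      = 3 * 2 ^ (p + 2) / 2 ^ (l₁ + 1) by rw [pow_succ]; field_simp; ring]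
    gcongr
    linarith
  · refine ⟨2 ^ l₁, ?_, fun y₁ hy₁ y₂ hy₂ => two_pow_le_dist_of_mem_layer hfar (hQ₁ hy₁) (hQ₂ hy₂)⟩
    have hρ₁ : (2 : ℝ) ^ (p + 2) / 2 ^ l₁ ≤ 1 :=
      div_le_one_of_le₀ (pow_le_pow_right₀ one_le_two hl₁) (by positivity)
    have hρ₂ : (2 : ℝ) ^ (p + 2) / 2 ^ l₂ ≤ 1 :=
      div_le_one_of_le₀ (pow_le_pow_right₀ one_le_two (by omega)) (by positivity)
    have h₄ : (2 : ℝ) ^ 2 ≤ 2 ^ l₁ := pow_le_pow_right₀ one_le_two (by omega)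
    linarith

lemma exists_pos_le_dist_plusC {n p l₁ l₂ : ℕ} (hl₁ : p + 2 ≤ l₁) (hl₂ : p + 2 ≤ l₂)
    {A₁ A₂ : Set (E n)} (hA₁ : A₁ ⊆ layer n l₁) (hA₂ : A₂ ⊆ layer n l₂) {c : ℝ}
    (hc : 2 ^ (p + 2) / 2 ^ l₁ + 2 ^ (p + 2) / 2 ^ l₂ < c)
    (hsep : ∀ y₁ ∈ A₁, ∀ y₂ ∈ A₂, c ≤ dist y₁ y₂) :
    ∃ δ : ℝ, 0 < δ ∧ ∀ z₁ ∈ plusC n (2 ^ p) A₁, ∀ z₂ ∈ plusC n (2 ^ p) A₂, δ ≤ dist z₁ z₂ :=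
  ⟨c - 2 ^ (p + 2) / 2 ^ l₁ - 2 ^ (p + 2) / 2 ^ l₂, by linarith, fun _ hz₁ _ hz₂ =>
    le_dist_of_dist_lt_of_separated hsep (exists_dist_lt_of_mem_plusC_of_subset_layer hl₁ hA₁ hz₁)
      (exists_dist_lt_of_mem_plusC_of_subset_layer hl₂ hA₂ hz₂)⟩

theorem stmt5_general (n : ℕ) (p κ : ℕ) (hκ : p + 4 ≤ κ)
    (l₁ l₂ : ℕ) (hl₁ : max (p + 2) ((κ + 2) / 2) ≤ l₁) (hl₂ : max (p + 2) ((κ + 2) / 2) ≤ l₂)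
    (v₁ v₂ : Fin n → ℤ)
    (hQ₁ : dyadicCube n l₁ v₁ ⊆ layer n l₁)
    (hQ₂ : dyadicCube n l₂ v₂ ⊆ layer n l₂)
    (hne : dyadicCube n l₁ v₁ ≠ dyadicCube n l₂ v₂)
    (hlabel : ∀ j, v₁ j % (2 ^ κ : ℤ) = v₂ j % (2 ^ κ : ℤ)) :
    ∃ δ : ℝ, 0 < δ ∧
      ∀ z₁ ∈ plusC n (2 ^ p) (dyadicCube n l₁ v₁),
        ∀ z₂ ∈ plusC n (2 ^ p) (dyadicCube n l₂ v₂), δ ≤ dist z₁ z₂ := by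
  have hp₁ : p + 2 ≤ l₁ := le_of_max_le_left hl₁
  have hp₂ : p + 2 ≤ l₂ := le_of_max_le_left hl₂
  have hκ₁ : κ ≤ 2 * l₁ := by have := le_of_max_le_right hl₁; omega
  have hκ₂ : κ ≤ 2 * l₂ := by have := le_of_max_le_right hl₂; omega
  obtain ⟨c, hc, hsep⟩ : ∃ c : ℝ, 2 ^ (p + 2) / 2 ^ l₁ + 2 ^ (p + 2) / 2 ^ l₂ < c ∧
      ∀ y₁ ∈ dyadicCube n l₁ v₁, ∀ y₂ ∈ dyadicCube n l₂ v₂, c ≤ dist y₁ y₂ := by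
    rcases le_total l₁ l₂ with hll | hll
    · exact exists_separation_of_same_label hκ hκ₁ hp₁ hll hQ₁ hQ₂ hne hlabel
    · obtain ⟨c, hc, hsep⟩ := exists_separation_of_same_label hκ hκ₂ hp₂ hll hQ₂ hQ₁ hne.symm
        fun j => (hlabel j).symm
      exact ⟨c, by linarith, fun y₁ hy₁ y₂ hy₂ => dist_comm y₁ y₂ ▸ hsep y₂ hy₂ y₁ hy₁⟩
  exact exists_pos_le_dist_plusC hp₁ hp₂ hQ₁ hQ₂ hc hsep

/-- Let `p ≥ 1`, `κ ≥ p + 4`, and `l₁, l₂ ≥ max (p+2) ⌈(κ+1)/2⌉`.  If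
`Q₁ = 2^{-l₁}(v₁ + [0,1)ⁿ) ∈ Δ^γ_{0,l₁}` and `Q₂ = 2^{-l₂}(v₂ + [0,1)ⁿ) ∈ Δ^γ_{0,l₂}` are
distinct cubes with the same label (the label of `2^{-l}(v+[0,1)ⁿ)` being
`(v j mod 2^κ) + 1`), then `d(Q₁ + 𝓒_{2^p}, Q₂ + 𝓒_{2^p}) > 0`. -/
theorem stmt5 (n : ℕ) (hn : 1 ≤ n) (p κ : ℕ) (hp : 1 ≤ p) (hκ : p + 4 ≤ κ)
    (l₁ l₂ : ℕ) (hl₁ : max (p + 2) ((κ + 2) / 2) ≤ l₁) (hl₂ : max (p + 2) ((κ + 2) / 2) ≤ l₂)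
    (v₁ v₂ : Fin n → ℤ)
    (hQ₁ : dyadicCube n l₁ v₁ ⊆ layer n l₁)
    (hQ₂ : dyadicCube n l₂ v₂ ⊆ layer n l₂)
    (hne : dyadicCube n l₁ v₁ ≠ dyadicCube n l₂ v₂)
    (hlabel : ∀ j, v₁ j % (2 ^ κ : ℤ) = v₂ j % (2 ^ κ : ℤ)) :
    ∃ δ : ℝ, 0 < δ ∧
      ∀ z₁ ∈ plusC n (2 ^ p) (dyadicCube n l₁ v₁),
        ∀ z₂ ∈ plusC n (2 ^ p) (dyadicCube n l₂ v₂), δ ≤ dist z₁ z₂ :=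
  stmt5_general n p κ hκ l₁ l₂ hl₁ hl₂ v₁ v₂ hQ₁ hQ₂ hne hlabel
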